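/- arXiv:1906.00531 — 2 statements merged into one kernel-verified Lean document; each statement's English description precedes it below -/
import Mathlib

section
/- Let z₁,…,z_n be i.i.d. mean-zero random vectors in ℝ^d with each one-dimensional projection ⟨z, θ⟩ (for unit θ) subexponential with parameter λ, and let Z_i = z₁ + ⋯ + z_i. Then with probability at least 1-δ, max_{i∈[n]} ‖Z_i‖₂ ≤ O(λ√(d n log(2d/δ)) + λ d^{1/2} log(2d/δ)). -/
/-!
Chernoff's method on one-dimensional projections. The moment bound `E|X|^p ≤ (pλ)^p` and
`p^p ≤ e^p p!` make every term of the exponential series of `E e^{sX}` at most `(eλs)^p`, so a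
mean-zero projection has `E e^{sX} ≤ exp (2 (eλs)²)` for `0 ≤ s ≤ 1/(2eλ)`. Optimising `s` gives a
Bernstein tail `e^{-L}` for a sum of at most `n` projections at level
`β = 4eλL + √(8(eλ)² n L)`, and a union bound over the `2d` vectors `± e_k` gives
`P(‖S‖ > √d β) ≤ 2d e^{-L} = δ/2` for every block sum `S` of the `z_j`, with `L = log (4d/δ)`.

The maximum is handled by a first-passage (Ottaviani-type) argument: if `‖Z_i‖` first exceeds
`3α` at time `i`, then either the remainder `Z_n - Z_i`, which is independent of the past,
exceeds `2α`, or `‖Z_n‖ > α`. Hence `P(max_i ‖Z_i‖ > 3α) ≤ δ/2 + δ/2` for `α = √d β`.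
-/

open MeasureTheory ProbabilityTheory

/-- A real random variable `z` is `λ`-subexponential in the moment sense:
`sup_{p ≥ 1} p^{-1} (E|z|^p)^{1/p} ≤ λ`. -/
def MomentSubExponential {Ω : Type*} [MeasurableSpace Ω] (μ : Measure Ω) (z : Ω → ℝ)
    (lam : ℝ) : Prop :=
  ∀ p : ℝ, 1 ≤ p → eLpNorm z (ENNReal.ofReal p) μ ≤ ENNReal.ofReal (p * lam)

open Real Finset Function
open scoped ENNReal Nat

namespace MomentSubExponential

variable {Ω : Type*} {mΩ : MeasurableSpace Ω} {μ : Measure Ω} {X : Ω → ℝ} {lam : ℝ}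

lemma ae_eq_zero (hX : MomentSubExponential μ X 0) (hXm : AEStronglyMeasurable X μ) :
    X =ᵐ[μ] 0 := by
  have h := hX 1 le_rfl
  rw [mul_zero, ENNReal.ofReal_zero, nonpos_iff_eq_zero, ENNReal.ofReal_one] at h
  exact (eLpNorm_eq_zero_iff hXm one_ne_zero).1 h

lemma lintegral_enorm_pow_le (hX : MomentSubExponential μ X lam) (hlam : 0 ≤ lam) {p : ℕ}
    (hp : p ≠ 0) : ∫⁻ ω, ‖X ω‖ₑ ^ p ∂μ ≤ ENNReal.ofReal ((p * lam) ^ p) := by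
  have hp0 : (0 : ℝ) < p := by positivity
  calc ∫⁻ ω, ‖X ω‖ₑ ^ p ∂μ = eLpNorm X (ENNReal.ofReal p) μ ^ (p : ℝ) := by
        have h := eLpNorm_nnreal_pow_eq_lintegral (f := X) (μ := μ) (p := p) (by simpa using hp)
        simp only [NNReal.coe_natCast, ENNReal.rpow_natCast, ENNReal.coe_natCast] at h
        simp [h]
    _ ≤ ENNReal.ofReal (p * lam) ^ (p : ℝ) := by
        gcongr
        simpa using hX p (by exact_mod_cast Nat.one_le_iff_ne_zero.2 hp)
    _ = ENNReal.ofReal ((p * lam) ^ p) := by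
        rw [ENNReal.ofReal_rpow_of_nonneg (by positivity) hp0.le, Real.rpow_natCast]

lemma lintegral_enorm_pow_div_factorial_le [IsProbabilityMeasure μ]
    (hX : MomentSubExponential μ X lam) (hlam : 0 ≤ lam) {s : ℝ} (hs : 0 ≤ s) (p : ℕ) :
    ∫⁻ ω, ‖(s * X ω) ^ p / p !‖ₑ ∂μ ≤ ENNReal.ofReal ((s * (exp 1 * lam)) ^ p) := by
  rcases eq_or_ne p 0 with rfl | hp
  · simp
  have hfac : (0 : ℝ) < p ! := by positivity
  have hnorm : ∀ ω, ‖(s * X ω) ^ p / p !‖ₑ = ENNReal.ofReal (s ^ p / p !) * ‖X ω‖ₑ ^ p := by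
    intro ω
    rw [← ofReal_norm, ← ofReal_norm, ← ENNReal.ofReal_pow (norm_nonneg _),
      ← ENNReal.ofReal_mul (by positivity), norm_div, norm_pow, norm_mul,
      Real.norm_of_nonneg hs, Real.norm_of_nonneg hfac.le, mul_pow, mul_div_right_comm]
  calc ∫⁻ ω, ‖(s * X ω) ^ p / p !‖ₑ ∂μ
      ≤ ENNReal.ofReal (s ^ p / p !) * ENNReal.ofReal ((p * lam) ^ p) := by
        simp_rw [hnorm]
        rw [lintegral_const_mul' _ _ ENNReal.ofReal_ne_top]
        gcongr
        exact hX.lintegral_enorm_pow_le hlam hp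
    _ ≤ ENNReal.ofReal ((s * (exp 1 * lam)) ^ p) := by
        rw [← ENNReal.ofReal_mul (by positivity)]
        gcongr
        -- `p ^ p / p !` is a term of the series of `exp p`
        have h := pow_div_factorial_le_exp _ (Nat.cast_nonneg p) p
        rw [← exp_one_pow, div_le_iff₀ hfac] at h
        calc s ^ p / p ! * (p * lam) ^ p = (s * lam) ^ p * p ^ p / p ! := by ring
          _ ≤ (s * lam) ^ p * (exp 1 ^ p * p !) / p ! := by gcongr
          _ = (s * (exp 1 * lam)) ^ p := by field_simp; ring

end MomentSubExponential

section ExpSeries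

variable {Ω : Type*} {mΩ : MeasurableSpace Ω} {μ : Measure Ω} {X : Ω → ℝ} {s : ℝ}

lemma integrable_exp_mul_of_tsum_lintegral_ne_top (hX : AEMeasurable X μ)
    (hsum : ∑' p : ℕ, ∫⁻ ω, ‖(s * X ω) ^ p / p !‖ₑ ∂μ ≠ ∞) :
    Integrable (fun ω => exp (s * X ω)) μ := by
  refine ⟨(hX.const_mul s).exp.aestronglyMeasurable, hasFiniteIntegral_iff_enorm.2 ?_⟩
  calc ∫⁻ ω, ‖exp (s * X ω)‖ₑ ∂μ ≤ ∫⁻ ω, ∑' p : ℕ, ‖(s * X ω) ^ p / p !‖ₑ ∂μ := by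
        gcongr with ω
        rw [exp_eq_exp_ℝ, NormedSpace.exp_eq_tsum_div]
        exact enorm_tsum_le_tsum_enorm
    _ = ∑' p : ℕ, ∫⁻ ω, ‖(s * X ω) ^ p / p !‖ₑ ∂μ :=
        lintegral_tsum fun p => (((hX.const_mul s).pow_const p).div_const _).enorm
    _ < ∞ := hsum.lt_top

lemma hasSum_integral_pow_div_factorial (hX : AEMeasurable X μ)
    (hsum : ∑' p : ℕ, ∫⁻ ω, ‖(s * X ω) ^ p / p !‖ₑ ∂μ ≠ ∞) :
    HasSum (fun p : ℕ => ∫ ω, ((s * X ω) ^ p / p !) ∂μ) (mgf X μ s) := by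
  have hsummable : Summable fun p : ℕ => ∫ ω, ((s * X ω) ^ p / p !) ∂μ := by
    refine (ENNReal.summable_toReal hsum).of_norm_bounded fun p => ?_
    rw [← ENNReal.toReal_ofReal (norm_nonneg _), ofReal_norm]
    exact ENNReal.toReal_mono (ne_top_of_le_ne_top hsum (ENNReal.le_tsum p))
      (enorm_integral_le_lintegral_enorm _)
  convert hsummable.hasSum
  simp_rw [mgf, exp_eq_exp_ℝ, NormedSpace.exp_eq_tsum_div]
  exact integral_tsum
    (fun p => (((hX.const_mul s).pow_const p).div_const _).aestronglyMeasurable) hsum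

lemma integrable_exp_mul_and_mgf_le (hX : AEMeasurable X μ) (h0 : ∫ ω, X ω ∂μ = 0) {q : ℝ}
    (hq0 : 0 ≤ q) (hq : q ≤ 1 / 2)
    (hterm : ∀ p : ℕ, ∫⁻ ω, ‖(s * X ω) ^ p / p !‖ₑ ∂μ ≤ ENNReal.ofReal (q ^ p)) :
    Integrable (fun ω => exp (s * X ω)) μ ∧ mgf X μ s ≤ exp (2 * q ^ 2) := by
  have hq1 : q < 1 := by linarith
  have hgeom := summable_geometric_of_lt_one hq0 hq1
  have hsum : ∑' p : ℕ, ∫⁻ ω, ‖(s * X ω) ^ p / p !‖ₑ ∂μ ≠ ∞ := by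
    refine ne_top_of_le_ne_top ?_ (ENNReal.tsum_le_tsum hterm)
    rw [← ENNReal.ofReal_tsum_of_nonneg (fun p => by positivity) hgeom]
    exact ENNReal.ofReal_ne_top
  refine ⟨integrable_exp_mul_of_tsum_lintegral_ne_top hX hsum, ?_⟩
  set g : ℕ → ℝ := fun p => ∫ ω, ((s * X ω) ^ p / p !) ∂μ
  have hg := hasSum_integral_pow_div_factorial hX hsum
  have hg_le : ∀ p, g p ≤ q ^ p := fun p => by
    refine (le_abs_self _).trans ?_
    rw [← Real.norm_eq_abs, ← ENNReal.ofReal_le_ofReal_iff (by positivity), ofReal_norm]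
    exact (enorm_integral_le_lintegral_enorm _).trans (hterm p)
  have hg1 : g 1 = 0 := by simp [g, integral_const_mul, h0]
  calc mgf X μ s = g 0 + g 1 + ∑' p, g (p + 2) := by
        rw [← hg.tsum_eq, ← hg.summable.sum_add_tsum_nat_add 2, sum_range_succ, sum_range_one]
    _ ≤ 1 + 0 + ∑' p, q ^ (p + 2) := by
        rw [hg1]
        gcongr
        · simpa using hg_le 0
        · exact (summable_nat_add_iff 2).2 hg.summable
        · exact (summable_nat_add_iff 2).2 hgeom
        · exact hg_le _
    _ = 1 + q ^ 2 * (1 - q)⁻¹ := by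
        simp_rw [pow_add, tsum_mul_right, tsum_geometric_of_lt_one hq0 hq1]
        ring
    _ ≤ 1 + q ^ 2 * 2 := by
        gcongr
        rw [inv_le_comm₀ (by linarith) two_pos]
        linarith
    _ ≤ exp (2 * q ^ 2) := by linarith [add_one_le_exp (2 * q ^ 2)]

end ExpSeries

lemma exists_chernoff_parameter {K N L β : ℝ} (hK : 0 < K) (hN : 0 < N) (hL : 0 ≤ L)
    (hβ₁ : 4 * K * L ≤ β) (hβ₂ : 8 * K ^ 2 * N * L ≤ β ^ 2) :
    ∃ s, 0 ≤ s ∧ s * K ≤ 1 / 2 ∧ -s * β + N * (2 * (s * K) ^ 2) ≤ -L := by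
  have hβ : 0 ≤ β := le_trans (by positivity) hβ₁
  by_cases hlarge : 2 * K * N ≤ β
  · refine ⟨1 / (2 * K), by positivity, by field_simp; rfl, ?_⟩
    have : -(1 / (2 * K)) * β + N * (2 * (1 / (2 * K) * K) ^ 2)
        = -L - ((β - 2 * K * N) + (β - 4 * K * L)) / (4 * K) := by field_simp; ring
    rw [this, sub_le_self_iff]
    exact div_nonneg (by linarith) (by positivity)
  · replace hlarge := (not_le.1 hlarge).le
    refine ⟨β / (4 * K ^ 2 * N), by positivity, ?_, ?_⟩
    · rw [div_mul_eq_mul_div, div_le_iff₀ (by positivity)]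
      nlinarith
    · have : -(β / (4 * K ^ 2 * N)) * β + N * (2 * (β / (4 * K ^ 2 * N) * K) ^ 2)
          = -(β ^ 2 / (8 * K ^ 2 * N)) := by field_simp; ring
      rw [this, neg_le_neg_iff, le_div_iff₀ (by positivity)]
      linarith

section Chernoff

variable {Ω ι : Type*} {mΩ : MeasurableSpace Ω} {μ : Measure Ω}

lemma measureReal_sum_ge_le_exp_of_mgf_le {X : ι → Ω → ℝ} (hindep : iIndepFun X μ)
    (hmeas : ∀ i, Measurable (X i)) {I : Finset ι} {s c : ℝ} (hs : 0 ≤ s)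
    (hint : ∀ i ∈ I, Integrable (fun ω => exp (s * X i ω)) μ)
    (hmgf : ∀ i ∈ I, mgf (X i) μ s ≤ exp c) (β : ℝ) :
    μ.real {ω | β ≤ ∑ i ∈ I, X i ω} ≤ exp (-s * β + #I * c) := by
  have := hindep.isProbabilityMeasure
  have hchernoff := measure_ge_le_exp_mul_mgf β hs (hindep.integrable_exp_mul_sum hmeas hint)
  simp only [Finset.sum_apply] at hchernoff
  calc _ ≤ exp (-s * β) * mgf (∑ i ∈ I, X i) μ s := hchernoff
    _ ≤ exp (-s * β) * ∏ _i ∈ I, exp c := by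
        rw [hindep.mgf_sum hmeas]
        gcongr with i hi
        exacts [fun i _ => mgf_nonneg, hmgf i hi]
    _ = exp (-s * β + #I * c) := by rw [prod_const, ← exp_nat_mul, ← exp_add]

lemma MomentSubExponential.measure_sum_ge_le_exp_neg {X : ι → Ω → ℝ} {lam : ℝ}
    (hindep : iIndepFun X μ) (hmeas : ∀ i, Measurable (X i)) (hzero : ∀ i, ∫ ω, X i ω ∂μ = 0)
    (hX : ∀ i, MomentSubExponential μ (X i) lam) (hlam : 0 < lam) {I : Finset ι} {N L β : ℝ}
    (hN : 0 < N) (hIN : #I ≤ N) (hL : 0 ≤ L) (hβ₁ : 4 * (exp 1 * lam) * L ≤ β)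
    (hβ₂ : 8 * (exp 1 * lam) ^ 2 * N * L ≤ β ^ 2) :
    μ {ω | β ≤ ∑ i ∈ I, X i ω} ≤ ENNReal.ofReal (exp (-L)) := by
  have := hindep.isProbabilityMeasure
  obtain ⟨s, hs, hsK, hexp⟩ := exists_chernoff_parameter (by positivity) hN hL hβ₁ hβ₂
  have hmgf := fun i => integrable_exp_mul_and_mgf_le (hmeas i).aemeasurable (hzero i)
    (by positivity) hsK ((hX i).lintegral_enorm_pow_div_factorial_le hlam.le hs)
  rw [← ofReal_measureReal]
  gcongr
  refine (measureReal_sum_ge_le_exp_of_mgf_le hindep hmeas hs (fun i _ => (hmgf i).1)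
    (fun i _ => (hmgf i).2) β).trans (exp_le_exp.2 (le_trans ?_ hexp))
  gcongr

end Chernoff

lemma OrthonormalBasis.exists_lt_abs_inner {ι E : Type*} [Fintype ι] [NormedAddCommGroup E]
    [InnerProductSpace ℝ E] (b : OrthonormalBasis ι ℝ E) {x : E} {β : ℝ}
    (h : √(Fintype.card ι) * β < ‖x‖) : ∃ i, β < |inner ℝ (b i) x| := by
  by_contra! hle
  have hx := b.norm_le_card_mul_iSup_norm_inner x
  cases isEmpty_or_nonempty ι
  · simp at h hx
    exact h hx
  · have hsup : ⨆ i, ‖inner ℝ (b i) x‖ ≤ β := ciSup_le fun i => (norm_eq_abs _).trans_le (hle i)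
    have := mul_le_mul_of_nonneg_left hsup (sqrt_nonneg (Fintype.card ι))
    linarith

section Projections

variable {Ω ι E : Type*} {mΩ : MeasurableSpace Ω} {μ : Measure Ω} [NormedAddCommGroup E]
  [InnerProductSpace ℝ E] [FiniteDimensional ℝ E] [MeasurableSpace E] [BorelSpace E]

lemma ae_eq_zero_of_forall_inner_momentSubExponential_zero {Z : Ω → E} (hZ : Measurable Z)
    (h : ∀ θ : E, ‖θ‖ = 1 → MomentSubExponential μ (fun ω => inner ℝ θ (Z ω)) 0) :
    Z =ᵐ[μ] 0 := by
  set b := stdOrthonormalBasis ℝ E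
  have hcoord : ∀ k, ∀ᵐ ω ∂μ, inner ℝ (b k) (Z ω) = 0 := fun k =>
    (h (b k) (b.orthonormal.1 k)).ae_eq_zero (measurable_const.inner hZ).aestronglyMeasurable
  filter_upwards [ae_all_iff.2 hcoord] with ω hω
  exact b.repr.map_eq_zero_iff.1 (by ext k; simp [b.repr_apply_apply, hω k])

lemma measure_sqrt_finrank_mul_lt_norm_sum_le {z : ι → Ω → E} {lam : ℝ}
    (hindep : iIndepFun z μ) (hmeas : ∀ i, Measurable (z i)) (hint : ∀ i, Integrable (z i) μ)
    (hzero : ∀ i, ∫ ω, z i ω ∂μ = 0)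
    (hmom : ∀ i (θ : E), ‖θ‖ = 1 → MomentSubExponential μ (fun ω => inner ℝ θ (z i ω)) lam)
    (hlam : 0 < lam) {I : Finset ι} {N L β : ℝ} (hN : 0 < N) (hIN : #I ≤ N) (hL : 0 ≤ L)
    (hβ₁ : 4 * (exp 1 * lam) * L ≤ β) (hβ₂ : 8 * (exp 1 * lam) ^ 2 * N * L ≤ β ^ 2) :
    μ {ω | √(Module.finrank ℝ E) * β < ‖∑ i ∈ I, z i ω‖} ≤
      2 * Module.finrank ℝ E * ENNReal.ofReal (exp (-L)) := by
  have hproj : ∀ θ : E, ‖θ‖ = 1 →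
      μ {ω | β ≤ inner ℝ θ (∑ i ∈ I, z i ω)} ≤ ENNReal.ofReal (exp (-L)) := by
    intro θ hθ
    simp_rw [inner_sum]
    refine MomentSubExponential.measure_sum_ge_le_exp_neg
      (hindep.comp (fun _ v => inner ℝ θ v) fun _ => measurable_const.inner measurable_id)
      (fun i => measurable_const.inner (hmeas i)) (fun i => ?_) (fun i => hmom i θ hθ) hlam
      hN hIN hL hβ₁ hβ₂
    show ∫ ω, inner ℝ θ (z i ω) ∂μ = 0
    rw [integral_inner (hint i), hzero i, inner_zero_right]
  set b := stdOrthonormalBasis ℝ E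
  have hcover : {ω | √(Module.finrank ℝ E) * β < ‖∑ i ∈ I, z i ω‖} ⊆
      ⋃ k, ({ω | β ≤ inner ℝ (b k) (∑ i ∈ I, z i ω)} ∪
        {ω | β ≤ inner ℝ (-b k) (∑ i ∈ I, z i ω)}) := by
    intro ω hω
    obtain ⟨k, hk⟩ := b.exists_lt_abs_inner (by simpa using hω)
    simp only [Set.mem_iUnion, Set.mem_union, Set.mem_ofPred_eq, inner_neg_left]
    exact ⟨k, (lt_abs.1 hk).imp le_of_lt le_of_lt⟩
  calc _ ≤ ∑ k, (μ {ω | β ≤ inner ℝ (b k) (∑ i ∈ I, z i ω)} +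
        μ {ω | β ≤ inner ℝ (-b k) (∑ i ∈ I, z i ω)}) :=
        (measure_mono hcover).trans <| (measure_iUnion_fintype_le _ _).trans <|
          sum_le_sum fun k _ => measure_union_le _ _
    _ ≤ ∑ _k : Fin (Module.finrank ℝ E), 2 * ENNReal.ofReal (exp (-L)) := by
        gcongr with k
        rw [two_mul]
        exact add_le_add (hproj _ (b.orthonormal.1 k)) (hproj _ (by simp))
    _ = 2 * Module.finrank ℝ E * ENNReal.ofReal (exp (-L)) := by
        simp [mul_assoc, mul_left_comm]

end Projections

section Ottaviani

variable {Ω ι : Type*} {mΩ : MeasurableSpace Ω} {μ : Measure Ω}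

lemma measure_iUnion_le_add_of_indepSet [Countable ι] [IsProbabilityMeasure μ]
    {A B : ι → Set Ω} {C : Set Ω} {ε : ℝ≥0∞} (hA : ∀ i, MeasurableSet (A i))
    (hB : ∀ i, MeasurableSet (B i)) (hAdisj : Pairwise (Disjoint on A))
    (hAB : ∀ i, IndepSet (A i) (B i) μ) (hBε : ∀ i, μ (B i) ≤ ε) (hAC : ∀ i, A i \ B i ⊆ C) :
    μ (⋃ i, A i) ≤ μ C + ε := by
  calc μ (⋃ i, A i) = ∑' i, μ (A i) := measure_iUnion hAdisj hA
    _ ≤ ∑' i, (μ (A i \ B i) + μ (A i) * μ (B i)) := by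
        gcongr with i
        rw [← (hAB i).measure_inter_eq_mul, add_comm]
        exact measure_le_inter_add_sdiff μ (A i) (B i)
    _ = μ (⋃ i, A i \ B i) + ∑' i, μ (A i) * μ (B i) := by
        rw [ENNReal.tsum_add, measure_iUnion
          (hAdisj.mono fun i j h => h.mono Set.sdiff_subset Set.sdiff_subset)
          fun i => (hA i).diff (hB i)]
    _ ≤ μ C + (∑' i, μ (A i)) * ε := by
        rw [← ENNReal.tsum_mul_right]
        gcongr with i
        · exact Set.iUnion_subset hAC
        · exact hBε i
    _ ≤ μ C + ε := by
        rw [← measure_iUnion hAdisj hA]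
        gcongr
        exact mul_le_of_le_one_left' prob_le_one

lemma pairwise_disjoint_firstPassage [LinearOrder ι] (f : ι → Ω → ℝ) (c : ℝ) :
    Pairwise (Disjoint on fun i => {ω | c < f i ω ∧ ∀ j < i, f j ω ≤ c}) := by
  intro i j hij
  wlog hlt : i < j generalizing i j
  · exact (this hij.symm ((Ne.symm hij).lt_of_le (not_lt.1 hlt))).symm
  exact Set.disjoint_left.2 fun ω hωi hωj => absurd hωi.1 (not_lt.2 (hωj.2 i hlt))

lemma setOf_exists_lt_subset_iUnion_firstPassage [LinearOrder ι] [WellFoundedLT ι]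
    (f : ι → Ω → ℝ) (c : ℝ) :
    {ω | ∃ i, c < f i ω} ⊆ ⋃ i, {ω | c < f i ω ∧ ∀ j < i, f j ω ≤ c} := by
  rintro ω ⟨i, hi⟩
  obtain ⟨i, hi, hmin⟩ := wellFounded_lt.has_min {i | c < f i ω} ⟨i, hi⟩
  exact Set.mem_iUnion.2 ⟨i, hi, fun j hj => not_lt.1 fun h => hmin j h hj⟩

variable {E : Type*} [NormedAddCommGroup E] [mE : MeasurableSpace E] [BorelSpace E]
  [SecondCountableTopology E] {z : ι → Ω → E}

lemma measurable_sum_iSup_comap {S : Set ι} {J : Finset ι} (hJ : ∀ j ∈ J, j ∈ S) :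
    Measurable[⨆ j ∈ S, mE.comap (z j)] fun ω => ∑ j ∈ J, z j ω :=
  Finset.measurable_sum J fun j hj => (comap_measurable (z j)).mono
    (le_iSup₂ (f := fun j _ => mE.comap (z j)) j (hJ j hj)) le_rfl

theorem measure_exists_lt_norm_partialSum_le [Fintype ι] [LinearOrder ι]
    (hmeas : ∀ i, Measurable (z i)) (hindep : iIndepFun z μ) {t u : ℝ} {ε : ℝ≥0∞}
    (htail : ∀ i, μ {ω | u < ‖∑ j ∈ univ.filter (i < ·), z j ω‖} ≤ ε) :
    μ {ω | ∃ i, t + u < ‖∑ j ∈ univ.filter (· ≤ i), z j ω‖} ≤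
      μ {ω | t < ‖∑ j, z j ω‖} + ε := by
  have := hindep.isProbabilityMeasure
  set Z : ι → Ω → E := fun i ω => ∑ j ∈ univ.filter (· ≤ i), z j ω
  set R : ι → Ω → E := fun i ω => ∑ j ∈ univ.filter (i < ·), z j ω
  set A : ι → Set Ω := fun i => {ω | t + u < ‖Z i ω‖ ∧ ∀ j < i, ‖Z j ω‖ ≤ t + u}
  set B : ι → Set Ω := fun i => {ω | u < ‖R i ω‖}
  have hA : ∀ i, MeasurableSet[⨆ j ∈ Set.Iic i, mE.comap (z j)] (A i) := by
    intro i
    have hZ : ∀ j ≤ i, Measurable[⨆ j ∈ Set.Iic i, mE.comap (z j)] (Z j) := fun j hj =>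
      measurable_sum_iSup_comap fun k hk => ((mem_filter.1 hk).2.trans hj :)
    simp only [A, Set.ofPred_and, Set.ofPred_forall]
    exact (measurable_norm.comp (hZ i le_rfl) measurableSet_Ioi).inter <| .iInter fun j =>
      .iInter fun hj => measurable_norm.comp (hZ j (le_of_lt hj)) measurableSet_Iic
  have hB : ∀ i, MeasurableSet[⨆ j ∈ Set.Ioi i, mE.comap (z j)] (B i) := fun i =>
    measurable_norm.comp
      (measurable_sum_iSup_comap (J := univ.filter (i < ·)) fun k hk => (mem_filter.1 hk).2)
      measurableSet_Ioi
  have hcomap_le : ∀ j, mE.comap (z j) ≤ mΩ := fun j => (hmeas j).comap_le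
  have hAB : ∀ i, IndepSet (A i) (B i) μ := fun i =>
    (indep_iSup_of_disjoint hcomap_le hindep.iIndep
      (Set.Iic_disjoint_Ioi le_rfl)).indepSet_of_measurableSet (hA i) (hB i)
  have hAB_sub : ∀ i, A i \ B i ⊆ {ω | t < ‖∑ j, z j ω‖} := by
    rintro i ω ⟨⟨hZi, -⟩, hRi⟩
    have hsplit : ∑ j, z j ω = Z i ω + R i ω := by
      simp only [Z, R, ← not_le]
      exact (sum_filter_add_sum_filter_not _ _ _).symm
    have := norm_le_add_norm_add (Z i ω) (R i ω)
    simp only [B, Set.mem_ofPred_eq, not_lt] at hRi ⊢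
    rw [hsplit]
    linarith
  calc _ ≤ μ (⋃ i, A i) :=
        measure_mono (setOf_exists_lt_subset_iUnion_firstPassage (fun i ω => ‖Z i ω‖) _)
    _ ≤ _ := measure_iUnion_le_add_of_indepSet
      (fun i => iSup₂_le (fun j _ => hcomap_le j) _ (hA i))
      (fun i => iSup₂_le (fun j _ => hcomap_le j) _ (hB i))
      (pairwise_disjoint_firstPassage (fun i ω => ‖Z i ω‖) _) hAB htail hAB_sub

end Ottaviani

lemma ofReal_one_sub_le_measure_of_measure_compl_le {Ω : Type*} {mΩ : MeasurableSpace Ω}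
    {μ : Measure Ω} [IsProbabilityMeasure μ] {S : Set Ω} {δ : ℝ} (hδ : 0 ≤ δ)
    (h : μ Sᶜ ≤ ENNReal.ofReal δ) : ENNReal.ofReal (1 - δ) ≤ μ S := by
  have hcover : 1 ≤ μ S + μ Sᶜ := by
    rw [← measure_univ (μ := μ), ← Set.union_compl_self S]
    exact measure_union_le _ _
  rw [ENNReal.ofReal_sub _ hδ, ENNReal.ofReal_one]
  exact (tsub_le_tsub_left h 1).trans (tsub_le_iff_right.2 hcover)

lemma two_mul_ofReal_mul_ofReal_exp_neg_log {d δ : ℝ} (hd : 0 < d) (hδ : 0 < δ) :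
    2 * ENNReal.ofReal d * ENNReal.ofReal (exp (-log (4 * d / δ))) = ENNReal.ofReal (δ / 2) := by
  rw [exp_neg, exp_log (by positivity), ← ENNReal.ofReal_ofNat 2,
    ← ENNReal.ofReal_mul (by norm_num), ← ENNReal.ofReal_mul (by positivity)]
  congr 1
  field_simp
  ring

lemma le_sq_add_sqrt {a x : ℝ} (ha : 0 ≤ a) (hx : 0 ≤ x) : x ≤ (a + √x) ^ 2 := by
  nlinarith [sq_sqrt hx, sqrt_nonneg x]

theorem ofReal_one_sub_le_measure_forall_norm_partialSum_le {Ω ι E : Type*}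
    {mΩ : MeasurableSpace Ω} {μ : Measure Ω} [Fintype ι] [LinearOrder ι] [NormedAddCommGroup E]
    [InnerProductSpace ℝ E] [FiniteDimensional ℝ E] [MeasurableSpace E] [BorelSpace E]
    {z : ι → Ω → E} {lam : ℝ} (hindep : iIndepFun z μ) (hmeas : ∀ i, Measurable (z i))
    (hint : ∀ i, Integrable (z i) μ) (hzero : ∀ i, ∫ ω, z i ω ∂μ = 0)
    (hmom : ∀ i (θ : E), ‖θ‖ = 1 → MomentSubExponential μ (fun ω => inner ℝ θ (z i ω)) lam)
    (hlam : 0 < lam) (hι : 0 < Fintype.card ι) (hE : 0 < Module.finrank ℝ E) {δ : ℝ}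
    (hδ₀ : 0 < δ) (hδ₁ : δ ≤ 1) :
    ENNReal.ofReal (1 - δ) ≤
      μ {ω | ∀ i, ‖∑ j ∈ univ.filter (· ≤ i), z j ω‖ ≤
        3 * (√(Module.finrank ℝ E) * (4 * (exp 1 * lam) * log (4 * Module.finrank ℝ E / δ) +
          √(8 * (exp 1 * lam) ^ 2 * Fintype.card ι * log (4 * Module.finrank ℝ E / δ))))} := by
  have := hindep.isProbabilityMeasure
  set d : ℕ := Module.finrank ℝ E
  set L := log (4 * d / δ)
  set β := 4 * (exp 1 * lam) * L + √(8 * (exp 1 * lam) ^ 2 * Fintype.card ι * L)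
  set α := √d * β
  have hL : 0 ≤ L := by
    have : (1 : ℝ) ≤ d := by exact_mod_cast hE
    exact log_nonneg (by rw [le_div_iff₀ hδ₀]; linarith)
  have hβ₁ : 4 * (exp 1 * lam) * L ≤ β := le_add_of_nonneg_right (sqrt_nonneg _)
  have hα : 0 ≤ α := mul_nonneg (sqrt_nonneg _) (le_trans (by positivity) hβ₁)
  have htail : ∀ I : Finset ι, μ {ω | α < ‖∑ i ∈ I, z i ω‖} ≤ ENNReal.ofReal (δ / 2) := by
    intro I
    refine (measure_sqrt_finrank_mul_lt_norm_sum_le hindep hmeas hint hzero hmom hlam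
      (by exact_mod_cast hι) (by exact_mod_cast I.card_le_univ) hL hβ₁
      (le_sq_add_sqrt (by positivity) (by positivity))).trans_eq ?_
    rw [← ENNReal.ofReal_natCast]
    exact two_mul_ofReal_mul_ofReal_exp_neg_log (by exact_mod_cast hE) hδ₀
  have hmax := measure_exists_lt_norm_partialSum_le (t := α) (u := 2 * α) hmeas hindep
    fun i => (measure_mono fun ω (h : 2 * α < _) => (by linarith : α < _)).trans (htail _)
  rw [show α + 2 * α = 3 * α by ring] at hmax
  refine ofReal_one_sub_le_measure_of_measure_compl_le hδ₀.le ?_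
  calc _ = μ {ω | ∃ i, 3 * α < ‖∑ j ∈ univ.filter (· ≤ i), z j ω‖} := by
        simp only [Set.compl_ofPred, not_forall, not_le]
    _ ≤ ENNReal.ofReal (δ / 2) + ENNReal.ofReal (δ / 2) :=
        hmax.trans (by gcongr; exact htail univ)
    _ = ENNReal.ofReal δ := by
        rw [← ENNReal.ofReal_add (by positivity) (by positivity), add_halves]

lemma log_four_mul_div_le_two_mul_log {d δ : ℝ} (hδ : 0 < δ) (hδd : δ ≤ d) :
    log (4 * d / δ) ≤ 2 * log (2 * d / δ) := by
  have hd : 0 < d := hδ.trans_le hδd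
  rw [show 2 * log (2 * d / δ) = log ((2 * d / δ) ^ 2) by rw [log_pow]; norm_num]
  refine log_le_log (by positivity) ?_
  rw [div_pow, div_le_div_iff₀ hδ (by positivity)]
  nlinarith [mul_le_mul_of_nonneg_left hδd (by positivity : (0 : ℝ) ≤ 4 * d * δ)]

lemma three_mul_sqrt_mul_le {d n δ lam : ℝ} (hd : 1 ≤ d) (hn : 0 ≤ n) (hδ₀ : 0 < δ)
    (hδ₁ : δ ≤ 1) (hlam : 0 ≤ lam) :
    3 * (√d * (4 * (exp 1 * lam) * log (4 * d / δ) +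
      √(8 * (exp 1 * lam) ^ 2 * n * log (4 * d / δ)))) ≤
      72 * (lam * √(d * n * log (2 * d / δ)) + lam * √d * log (2 * d / δ)) := by
  set L := log (4 * d / δ)
  set L₀ := log (2 * d / δ)
  have hL₀ : 0 ≤ L₀ := log_nonneg (by rw [le_div_iff₀ hδ₀]; linarith)
  have hLL₀ : L ≤ 2 * L₀ := log_four_mul_div_le_two_mul_log hδ₀ (by linarith)
  have he : exp 1 ≤ 3 := by linarith [exp_one_lt_d9]
  have hsqrt : √(8 * (exp 1 * lam) ^ 2 * n * L) ≤ 4 * (exp 1 * lam) * √(n * L₀) := by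
    rw [show 4 * (exp 1 * lam) * √(n * L₀) = √((4 * (exp 1 * lam)) ^ 2 * (n * L₀)) by
      rw [sqrt_mul (by positivity) (n * L₀), sqrt_sq (by positivity)]]
    refine sqrt_le_sqrt ?_
    nlinarith [mul_nonneg (mul_nonneg (sq_nonneg (exp 1 * lam)) hn) (sub_nonneg.2 hLL₀)]
  have hdn : √d * √(n * L₀) = √(d * n * L₀) := by rw [← sqrt_mul (by linarith), mul_assoc]
  have h₁ : 0 ≤ lam * √d * L₀ := by positivity
  have h₂ : 0 ≤ lam * √(d * n * L₀) := by positivity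
  calc _ ≤ 3 * (√d * (4 * (exp 1 * lam) * (2 * L₀) + 4 * (exp 1 * lam) * √(n * L₀))) := by
        gcongr
    _ = 24 * exp 1 * (lam * √d * L₀) + 12 * exp 1 * (lam * (√d * √(n * L₀))) := by ring
    _ ≤ 24 * 3 * (lam * √d * L₀) + 12 * 3 * (lam * √(d * n * L₀)) := by
        rw [hdn]
        gcongr
    _ ≤ _ := by linarith

/-- Maximal inequality for partial sums of i.i.d. mean-zero `λ`-subexponential
random vectors in `ℝ^d`: with probability at least `1 - δ`,
`max_{i ∈ [n]} ‖Z_i‖₂ ≤ C (λ √(d n log(2d/δ)) + λ √d log(2d/δ))`. -/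
theorem max_partial_sum_subexponential :
    ∃ C : ℝ, 0 < C ∧
      ∀ (Ω : Type) [MeasurableSpace Ω] (μ : Measure Ω) [IsProbabilityMeasure μ]
        (d n : ℕ) (hn : 0 < n) (z : Fin n → Ω → EuclideanSpace ℝ (Fin d)) (lam : ℝ),
        0 ≤ lam →
        (∀ i, Measurable (z i)) →
        iIndepFun z μ →
        (∀ i, Measure.map (z i) μ = Measure.map (z ⟨0, hn⟩) μ) →
        (∀ i, Integrable (z i) μ) →
        (∀ i, ∫ ω, z i ω ∂μ = 0) →
        (∀ i (θ : EuclideanSpace ℝ (Fin d)), ‖θ‖ = 1 →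
          MomentSubExponential μ (fun ω => (inner ℝ θ (z i ω) : ℝ)) lam) →
        ∀ δ : ℝ, 0 < δ → δ < 1 →
          ENNReal.ofReal (1 - δ) ≤
            μ {ω | ∀ i : Fin n,
              ‖∑ j ∈ Finset.univ.filter (fun j => j ≤ i), z j ω‖ ≤
                C * (lam * Real.sqrt (d * n * Real.log (2 * d / δ)) +
                  lam * Real.sqrt d * Real.log (2 * d / δ))} := by
  refine ⟨72, by norm_num, ?_⟩
  intro Ω _ μ _ d n hn z lam hlam hmeas hindep _ hint hzero hmom δ hδ₀ hδ₁
  have hle_one : 1 - δ ≤ 1 := by linarith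
  rcases Nat.eq_zero_or_pos d with rfl | hd
  · simpa [Subsingleton.elim _ (0 : EuclideanSpace ℝ (Fin 0))] using hle_one
  rcases hlam.eq_or_lt with rfl | hlam
  · have hz : ∀ᵐ ω ∂μ, ∀ i, z i ω = 0 := ae_all_iff.2 fun i =>
      ae_eq_zero_of_forall_inner_momentSubExponential_zero (hmeas i) (hmom i)
    rw [measure_congr (Filter.eventuallyEq_univ.2 (by filter_upwards [hz] with ω hω; simp [hω]))]
    simpa using hle_one
  have key := ofReal_one_sub_le_measure_forall_norm_partialSum_le hindep hmeas hint hzero hmom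
    hlam (by simpa using hn) (by simpa using hd) hδ₀ hδ₁.le
  simp only [finrank_euclideanSpace_fin, Fintype.card_fin] at key
  refine key.trans (measure_mono fun ω h i => (h i).trans ?_)
  exact three_mul_sqrt_mul_le (by exact_mod_cast hd) n.cast_nonneg hδ₀ hδ₁.le hlam.le
end

section
/- Residual estimation error bound: under the conditions that the empirical second moment matrices Σ̂ and Σ̂₁ satisfy the multiplicative spectral approximation 1-ε ≤ λ_min^{1/2}(Σ^{-1/2}Σ̂Σ^{-1/2}) ≤ λ_max^{1/2}(Σ^{-1/2}Σ̂Σ^{-1/2}) ≤ 1+ε (and similarly for Σ̂₁ relative to Σ₁) with ε ≤ 1/2, the bias of the plug-in residual satisfies |⟨R̂Σ̂R̂μ, μ⟩ - ⟨RΣRμ, μ⟩| ≤ (1/8)·⟨RΣRμ, μ⟩ + O((λ_max(Σ)/λ_min²(Σ))·‖μ‖₂²·ε²), where μ = E[xy], R = D† - Σ^{-1}, R̂ = D̂† - Σ̂^{-1}, and D (resp. D̂) is the block matrix with top-left block Σ₁ (resp. Σ̂₁) and zeros elsewhere. -/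
open MeasureTheory Matrix

noncomputable section

/-- Smallest eigenvalue of a Hermitian real matrix. -/
def specMin {d : ℕ} (A : Matrix (Fin d) (Fin d) ℝ) (hA : A.IsHermitian) : ℝ :=
  ⨅ i, hA.eigenvalues i

/-- Largest eigenvalue of a Hermitian real matrix. -/
def specMax {d : ℕ} (A : Matrix (Fin d) (Fin d) ℝ) (hA : A.IsHermitian) : ℝ :=
  ⨆ i, hA.eigenvalues i

/-- The square root of a positive semidefinite matrix, as `Matrix.PosSemidef.sqrt` was
defined in Mathlib (Dec 2024). -/
def posSemidefSqrt {n : Type*} [Fintype n] [DecidableEq n]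
    {A : Matrix n n ℝ} (hA : A.PosSemidef) : Matrix n n ℝ :=
  hA.1.eigenvectorUnitary.1 * diagonal ((↑) ∘ (√·) ∘ hA.1.eigenvalues) *
    (star hA.1.eigenvectorUnitary : Matrix n n ℝ)

/-!
Let `S = Σ^{1/2}` and `B = S⁻¹ Σ̂ S⁻¹`, whose spectrum lies in `[(1-ε)², (1+ε)²]`.
Conjugating by `S` gives the Loewner sandwich `(1-ε)² Σ ≤ Σ̂ ≤ (1+ε)² Σ`, and
`Σ̂⁻¹ - Σ⁻¹ = S⁻¹ (B⁻¹ - 1) S⁻¹` with `‖B⁻¹ - 1‖ ≤ 10ε` and `‖S⁻¹‖² ≤ 1/λ_min(Σ)`, so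
`‖Σ̂⁻¹ - Σ⁻¹‖ ≤ 10ε/λ_min(Σ)`; the same holds for the top-left block because
`λ_min(Σ₁) ≥ λ_min(Σ)`. Hence, for `a = Rμ` and `Δ = (R̂ - R)μ`, `‖a‖ ≤ 2‖μ‖/λ_min` and
`‖Δ‖ ≤ 20ε‖μ‖/λ_min`. Expanding `⟨a + Δ, Σ̂(a + Δ)⟩` and bounding the cross term by AM-GM
gives `|⟨R̂μ, Σ̂R̂μ⟩ - ⟨a, Σ̂a⟩| ≤ ⟨a, Σa⟩/16 + O(λ_max ‖Δ‖²)`, while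
`|⟨a, Σ̂a⟩ - ⟨a, Σa⟩| ≤ 3ε⟨a, Σa⟩ ≤ ⟨a, Σa⟩/16 + 25ε²⟨a, Σa⟩` and `⟨a, Σa⟩ ≤ λ_max ‖a‖²`.
-/

open scoped MatrixOrder

section LoewnerOrder

variable {n : Type*}

lemma isHermitian_of_smul_one_le [DecidableEq n] {A : Matrix n n ℝ} {c : ℝ}
    (h : c • (1 : Matrix n n ℝ) ≤ A) : A.IsHermitian := by
  simpa using (le_iff.mp h).isHermitian.add (isHermitian_one.smul (IsSelfAdjoint.all c))

lemma smul_one_le_submatrix {m : Type*} [DecidableEq m] [DecidableEq n] {A : Matrix n n ℝ}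
    {c : ℝ} (h : c • (1 : Matrix n n ℝ) ≤ A) (e : m ↪ n) :
    c • (1 : Matrix m m ℝ) ≤ A.submatrix e e := by
  rw [le_iff]
  convert (le_iff.mp h).submatrix e using 1
  ext i j
  simp [one_apply, e.injective.eq_iff]

variable [Fintype n]

lemma dotProduct_mulVec_le_of_le {A B : Matrix n n ℝ} (h : A ≤ B) (v : n → ℝ) :
    v ⬝ᵥ A *ᵥ v ≤ v ⬝ᵥ B *ᵥ v := by
  simpa [sub_mulVec] using (le_iff.mp h).dotProduct_mulVec_nonneg v

lemma dotProduct_smul_mulVec (c : ℝ) (A : Matrix n n ℝ) (v : n → ℝ) :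
    v ⬝ᵥ (c • A) *ᵥ v = c * (v ⬝ᵥ A *ᵥ v) := by
  rw [smul_mulVec, dotProduct_smul, smul_eq_mul]

lemma dotProduct_self_sub_le (u v : n → ℝ) :
    (u - v) ⬝ᵥ (u - v) ≤ 2 * (u ⬝ᵥ u) + 2 * (v ⬝ᵥ v) := by
  have h := dotProduct_self_star_nonneg (u + v)
  simp only [star_trivial, dotProduct_add, add_dotProduct, dotProduct_sub, sub_dotProduct,
    dotProduct_comm v u] at h ⊢
  linarith

lemma abs_dotProduct_mulVec_add_sub_le {A : Matrix n n ℝ} (hA : A.PosSemidef) (a Δ : n → ℝ)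
    {t : ℝ} (ht : 0 < t) :
    |(a + Δ) ⬝ᵥ A *ᵥ (a + Δ) - a ⬝ᵥ A *ᵥ a| ≤
      t * (a ⬝ᵥ A *ᵥ a) + (1 + t⁻¹) * (Δ ⬝ᵥ A *ᵥ Δ) := by
  have hsymm : Δ ⬝ᵥ A *ᵥ a = a ⬝ᵥ A *ᵥ Δ := by
    rw [dotProduct_mulVec, ← mulVec_transpose, dotProduct_comm,
      ← conjTranspose_eq_transpose_of_trivial, hA.isHermitian.eq]
  have hexpand (s : ℝ) : (s • a + Δ) ⬝ᵥ A *ᵥ (s • a + Δ) =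
      s ^ 2 * (a ⬝ᵥ A *ᵥ a) + 2 * s * (a ⬝ᵥ A *ᵥ Δ) + Δ ⬝ᵥ A *ᵥ Δ := by
    simp only [mulVec_add, mulVec_smul, dotProduct_add, add_dotProduct, dotProduct_smul,
      smul_dotProduct, smul_eq_mul, hsymm]
    ring
  have hplus := hA.dotProduct_mulVec_nonneg (t • a + Δ)
  have hminus := hA.dotProduct_mulVec_nonneg ((-t) • a + Δ)
  have hsum := hexpand 1
  have ha := hA.dotProduct_mulVec_nonneg a
  have hΔ := hA.dotProduct_mulVec_nonneg Δ
  simp only [star_trivial, hexpand, one_smul] at hplus hminus hsum ha hΔ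
  have htinv : t * t⁻¹ = 1 := mul_inv_cancel₀ ht.ne'
  rw [hsum, abs_le]
  constructor <;> nlinarith [inv_pos.mpr ht]

lemma dotProduct_mul_mul_mulVec {R : Matrix n n ℝ} (hR : R.IsHermitian) (A : Matrix n n ℝ)
    (v : n → ℝ) : v ⬝ᵥ (R * A * R) *ᵥ v = (R *ᵥ v) ⬝ᵥ A *ᵥ (R *ᵥ v) := by
  rw [← mulVec_mulVec, ← mulVec_mulVec, dotProduct_mulVec, ← mulVec_transpose,
    ← conjTranspose_eq_transpose_of_trivial, hR.eq, dotProduct_comm]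

end LoewnerOrder

lemma abs_inv_sub_one_le {ε x : ℝ} (hε0 : 0 ≤ ε) (hε : ε ≤ 1 / 2)
    (hlo : (1 - ε) ^ 2 ≤ x) (hhi : x ≤ (1 + ε) ^ 2) : |x⁻¹ - 1| ≤ 10 * ε := by
  have hx : 1 / 4 ≤ x := le_trans (by nlinarith) hlo
  have hxinv : x * x⁻¹ = 1 := mul_inv_cancel₀ (by positivity)
  rw [abs_le]
  constructor <;> nlinarith [inv_pos.mpr (show 0 < x by positivity)]

section SpectralBounds

variable {n : Type*} [Fintype n] [DecidableEq n]

lemma mulVec_dotProduct_mulVec_le {A : Matrix n n ℝ} {c : ℝ}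
    (h : Aᵀ * A ≤ c • (1 : Matrix n n ℝ)) (v : n → ℝ) :
    (A *ᵥ v) ⬝ᵥ (A *ᵥ v) ≤ c * (v ⬝ᵥ v) := by
  have := dotProduct_mulVec_le_of_le h v
  rwa [← mulVec_mulVec, dotProduct_mulVec, vecMul_transpose, dotProduct_smul_mulVec,
    one_mulVec] at this

lemma smul_one_le_iff_forall_spectrum {A : Matrix n n ℝ} (hA : A.IsHermitian) {c : ℝ} :
    c • (1 : Matrix n n ℝ) ≤ A ↔ ∀ x ∈ spectrum ℝ A, c ≤ x := by
  rw [← Algebra.algebraMap_eq_smul_one]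
  exact algebraMap_le_iff_le_spectrum hA.isSelfAdjoint

lemma le_smul_one_iff_forall_spectrum {A : Matrix n n ℝ} (hA : A.IsHermitian) {c : ℝ} :
    A ≤ c • (1 : Matrix n n ℝ) ↔ ∀ x ∈ spectrum ℝ A, x ≤ c := by
  rw [← Algebra.algebraMap_eq_smul_one]
  exact le_algebraMap_iff_spectrum_le hA.isSelfAdjoint

lemma isUnit_of_forall_spectrum_pos {A : Matrix n n ℝ} (h : ∀ x ∈ spectrum ℝ A, 0 < x) :
    IsUnit A :=
  (spectrum.zero_notMem_iff ℝ).mp fun h0 => (h 0 h0).false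

lemma inv_eq_cfc_inv {A : Matrix n n ℝ} (hA : A.IsHermitian) (hu : IsUnit A) :
    A⁻¹ = cfc (fun x : ℝ => x⁻¹) A := by
  rw [nonsing_inv_eq_ringInverse, cfc_ringInverse_id (R := ℝ) A hu hA.isSelfAdjoint]

lemma cfc_transpose_mul_self_le {A : Matrix n n ℝ} (hA : A.IsHermitian) (f : ℝ → ℝ) {η : ℝ}
    (h : ∀ x ∈ spectrum ℝ A, |f x| ≤ η) :
    (cfc f A)ᵀ * cfc f A ≤ η ^ 2 • (1 : Matrix n n ℝ) := by
  have hcont (g : ℝ → ℝ) : ContinuousOn g (spectrum ℝ A) := A.finite_real_spectrum.continuousOn g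
  have hself : (cfc f A).IsHermitian := cfc_predicate f A
  rw [← conjTranspose_eq_transpose_of_trivial, hself.eq,
    ← cfc_mul f f A (hcont _) (hcont _), ← Algebra.algebraMap_eq_smul_one,
    cfc_le_algebraMap_iff _ _ A (hcont _) hA.isSelfAdjoint]
  intro x hx
  nlinarith [abs_mul_abs_self (f x), abs_nonneg (f x), h x hx]

lemma inv_le_inv_smul_one {A : Matrix n n ℝ} {c : ℝ} (hc : 0 < c)
    (h : c • (1 : Matrix n n ℝ) ≤ A) : A⁻¹ ≤ c⁻¹ • (1 : Matrix n n ℝ) := by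
  have hA := isHermitian_of_smul_one_le h
  have hspec := (smul_one_le_iff_forall_spectrum hA).mp h
  rw [inv_eq_cfc_inv hA (isUnit_of_forall_spectrum_pos fun x hx => hc.trans_le (hspec x hx)),
    ← Algebra.algebraMap_eq_smul_one,
    cfc_le_algebraMap_iff _ _ A (A.finite_real_spectrum.continuousOn _) hA.isSelfAdjoint]
  exact fun x hx => inv_anti₀ hc (hspec x hx)

lemma inv_mulVec_dotProduct_le {A : Matrix n n ℝ} {c : ℝ} (hc : 0 < c)
    (h : c • (1 : Matrix n n ℝ) ≤ A) (v : n → ℝ) :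
    (A⁻¹ *ᵥ v) ⬝ᵥ (A⁻¹ *ᵥ v) ≤ c⁻¹ ^ 2 * (v ⬝ᵥ v) := by
  have hA := isHermitian_of_smul_one_le h
  have hspec := (smul_one_le_iff_forall_spectrum hA).mp h
  rw [inv_eq_cfc_inv hA (isUnit_of_forall_spectrum_pos fun x hx => hc.trans_le (hspec x hx))]
  refine mulVec_dotProduct_mulVec_le (cfc_transpose_mul_self_le hA _ fun x hx => ?_) v
  rw [abs_of_pos (inv_pos.mpr (hc.trans_le (hspec x hx)))]
  exact inv_anti₀ hc (hspec x hx)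

lemma inv_sub_one_transpose_mul_self_le {B : Matrix n n ℝ} (hB : B.IsHermitian) {ε : ℝ}
    (hε0 : 0 ≤ ε) (hε : ε ≤ 1 / 2)
    (hspec : ∀ x ∈ spectrum ℝ B, (1 - ε) ^ 2 ≤ x ∧ x ≤ (1 + ε) ^ 2) :
    (B⁻¹ - 1)ᵀ * (B⁻¹ - 1) ≤ (10 * ε) ^ 2 • (1 : Matrix n n ℝ) := by
  have hunit : IsUnit B := isUnit_of_forall_spectrum_pos fun x hx =>
    (by nlinarith : (0 : ℝ) < (1 - ε) ^ 2).trans_le (hspec x hx).1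
  have hcont (g : ℝ → ℝ) : ContinuousOn g (spectrum ℝ B) := B.finite_real_spectrum.continuousOn g
  have hE : B⁻¹ - 1 = cfc (fun x : ℝ => x⁻¹ - 1) B := by
    rw [cfc_sub (fun x : ℝ => x⁻¹) (fun _ => 1) B (hcont _) (hcont _),
      cfc_const_one ℝ B hB.isSelfAdjoint, inv_eq_cfc_inv hB hunit]
  rw [hE]
  exact cfc_transpose_mul_self_le hB _ fun x hx =>
    abs_inv_sub_one_le hε0 hε (hspec x hx).1 (hspec x hx).2

end SpectralBounds

section SpectralApproximation

variable {n : Type*} [Fintype n] [DecidableEq n]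

lemma mul_conj_inv_mul {S T : Matrix n n ℝ} (hS : IsUnit S) : S * (S⁻¹ * T * S⁻¹) * S = T := by
  have hdet : IsUnit S.det := (isUnit_iff_isUnit_det S).mp hS
  simp only [← Matrix.mul_assoc, mul_nonsing_inv S hdet, Matrix.one_mul]
  rw [Matrix.mul_assoc, nonsing_inv_mul S hdet, Matrix.mul_one]

lemma inv_sub_inv_eq_conj {S T : Matrix n n ℝ} (hS : IsUnit S) :
    T⁻¹ - (S * S)⁻¹ = S⁻¹ * ((S⁻¹ * T * S⁻¹)⁻¹ - 1) * S⁻¹ := by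
  have hdet : IsUnit S.det := (isUnit_iff_isUnit_det S).mp hS
  rw [Matrix.mul_inv_rev S S, Matrix.mul_inv_rev, Matrix.mul_inv_rev,
    nonsing_inv_nonsing_inv S hdet]
  simp only [Matrix.mul_sub, Matrix.sub_mul, ← Matrix.mul_assoc, nonsing_inv_mul S hdet,
    Matrix.one_mul, Matrix.mul_one]
  rw [Matrix.mul_assoc, mul_nonsing_inv S hdet, Matrix.mul_one]

lemma smul_le_and_le_smul_of_spectrum_conj {S Sig T : Matrix n n ℝ} (hS : S.IsHermitian)
    (hSu : IsUnit S) (hSS : S * S = Sig) (hB : (S⁻¹ * T * S⁻¹).IsHermitian) {c C : ℝ}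
    (hspec : ∀ x ∈ spectrum ℝ (S⁻¹ * T * S⁻¹), c ≤ x ∧ x ≤ C) :
    c • Sig ≤ T ∧ T ≤ C • Sig := by
  have hconj {X Y : Matrix n n ℝ} (h : X ≤ Y) : S * X * S ≤ S * Y * S := by
    simpa only [hS.isSelfAdjoint.star_eq] using star_left_conjugate_le_conjugate h S
  have hsmul (r : ℝ) : S * (r • (1 : Matrix n n ℝ)) * S = r • Sig := by simp [hSS]
  constructor
  · have := hconj ((smul_one_le_iff_forall_spectrum hB).mpr fun x hx => (hspec x hx).1)
    rwa [hsmul, mul_conj_inv_mul hSu] at this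
  · have := hconj ((le_smul_one_iff_forall_spectrum hB).mpr fun x hx => (hspec x hx).2)
    rwa [hsmul, mul_conj_inv_mul hSu] at this

lemma inv_sub_inv_mulVec_dotProduct_le {S Sig T : Matrix n n ℝ} (hS : S.IsHermitian)
    (hSu : IsUnit S) (hSS : S * S = Sig) {lam ε : ℝ} (hlam : 0 < lam)
    (hlamSig : lam • (1 : Matrix n n ℝ) ≤ Sig) (hε0 : 0 ≤ ε) (hε : ε ≤ 1 / 2)
    (hB : (S⁻¹ * T * S⁻¹).IsHermitian)
    (hspec : ∀ x ∈ spectrum ℝ (S⁻¹ * T * S⁻¹), (1 - ε) ^ 2 ≤ x ∧ x ≤ (1 + ε) ^ 2) (v : n → ℝ) :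
    ((T⁻¹ - Sig⁻¹) *ᵥ v) ⬝ᵥ ((T⁻¹ - Sig⁻¹) *ᵥ v) ≤ (10 * ε / lam) ^ 2 * (v ⬝ᵥ v) := by
  subst hSS
  have hSinv : (S⁻¹)ᵀ * S⁻¹ ≤ lam⁻¹ • (1 : Matrix n n ℝ) := by
    rw [← conjTranspose_eq_transpose_of_trivial, conjTranspose_nonsing_inv, hS.eq,
      ← Matrix.mul_inv_rev]
    exact inv_le_inv_smul_one hlam hlamSig
  have hE := inv_sub_one_transpose_mul_self_le hB hε0 hε hspec
  set w := S⁻¹ *ᵥ v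
  rw [inv_sub_inv_eq_conj hSu, ← mulVec_mulVec, ← mulVec_mulVec]
  calc _ ≤ lam⁻¹ * ((_ *ᵥ w) ⬝ᵥ (_ *ᵥ w)) := mulVec_dotProduct_mulVec_le hSinv _
    _ ≤ lam⁻¹ * ((10 * ε) ^ 2 * (w ⬝ᵥ w)) := by gcongr; exact mulVec_dotProduct_mulVec_le hE w
    _ ≤ lam⁻¹ * ((10 * ε) ^ 2 * (lam⁻¹ * (v ⬝ᵥ v))) := by
        gcongr; exact mulVec_dotProduct_mulVec_le hSinv v
    _ = (10 * ε / lam) ^ 2 * (v ⬝ᵥ v) := by field_simp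

lemma posSemidefSqrt_eq_sqrt {A : Matrix n n ℝ} (hA : A.PosSemidef) :
    posSemidefSqrt hA = CFC.sqrt A := by
  rw [CFC.sqrt_eq_real_sqrt A hA.nonneg, cfcₙ_eq_cfc, hA.isHermitian.cfc_eq]
  rfl

lemma posSemidefSqrt_mul_self {A : Matrix n n ℝ} (hA : A.PosSemidef) :
    posSemidefSqrt hA * posSemidefSqrt hA = A := by
  rw [posSemidefSqrt_eq_sqrt]
  exact CFC.sqrt_mul_sqrt_self A hA.nonneg

lemma isHermitian_posSemidefSqrt {A : Matrix n n ℝ} (hA : A.PosSemidef) :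
    (posSemidefSqrt hA).IsHermitian := by
  rw [posSemidefSqrt_eq_sqrt]
  exact (CFC.sqrt_nonneg A).isSelfAdjoint

lemma isUnit_posSemidefSqrt {A : Matrix n n ℝ} (hA : A.PosDef) :
    IsUnit (posSemidefSqrt hA.posSemidef) := by
  rw [posSemidefSqrt_eq_sqrt, CFC.isUnit_sqrt_iff A hA.posSemidef.nonneg]
  exact hA.isUnit

end SpectralApproximation

section ExtremeEigenvalues

variable {d : ℕ} {A : Matrix (Fin d) (Fin d) ℝ}

lemma specMin_le_of_mem_spectrum (hA : A.IsHermitian) {x : ℝ} (hx : x ∈ spectrum ℝ A) :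
    specMin A hA ≤ x := by
  obtain ⟨i, rfl⟩ := hA.spectrum_real_eq_range_eigenvalues ▸ hx
  exact ciInf_le (Set.finite_range _).bddBelow i

lemma le_specMax_of_mem_spectrum (hA : A.IsHermitian) {x : ℝ} (hx : x ∈ spectrum ℝ A) :
    x ≤ specMax A hA := by
  obtain ⟨i, rfl⟩ := hA.spectrum_real_eq_range_eigenvalues ▸ hx
  exact le_ciSup (Set.finite_range _).bddAbove i

lemma specMin_smul_one_le (hA : A.IsHermitian) : specMin A hA • (1 : Matrix _ _ ℝ) ≤ A :=
  (smul_one_le_iff_forall_spectrum hA).mpr fun _ hx => specMin_le_of_mem_spectrum hA hx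

lemma le_specMax_smul_one (hA : A.IsHermitian) : A ≤ specMax A hA • (1 : Matrix _ _ ℝ) :=
  (le_smul_one_iff_forall_spectrum hA).mpr fun _ hx => le_specMax_of_mem_spectrum hA hx

lemma specMin_le_specMax [NeZero d] (hA : A.IsHermitian) : specMin A hA ≤ specMax A hA :=
  (specMin_le_of_mem_spectrum hA (hA.eigenvalues_mem_spectrum_real 0)).trans
    (le_specMax_of_mem_spectrum hA (hA.eigenvalues_mem_spectrum_real 0))

lemma specMin_pos [NeZero d] (hA : A.PosDef) : 0 < specMin A hA.isHermitian := by
  obtain ⟨i, hi⟩ := Finite.exists_min hA.isHermitian.eigenvalues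
  exact (hA.eigenvalues_pos i).trans_le (le_ciInf hi)

lemma sq_le_and_le_sq_of_sqrt_specMin_specMax (hA : A.IsHermitian) {a b : ℝ} (ha : 0 < a)
    (hmin : a ≤ √(specMin A hA)) (hmax : √(specMax A hA) ≤ b) :
    ∀ x ∈ spectrum ℝ A, a ^ 2 ≤ x ∧ x ≤ b ^ 2 := fun _ hx =>
  ⟨((Real.le_sqrt' ha).mp hmin).trans (specMin_le_of_mem_spectrum hA hx),
    (le_specMax_of_mem_spectrum hA hx).trans
      ((Real.sqrt_le_left ((Real.sqrt_nonneg _).trans hmax)).mp hmax)⟩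

end ExtremeEigenvalues

section TopLeftBlock

variable {d₁ d₂ : ℕ}

/-- `embedTopLeft d₂ Σ₁⁻¹` is the pseudoinverse `D†` of `D = embedTopLeft d₂ Σ₁`. -/
def embedTopLeft (d₂ : ℕ) (M : Matrix (Fin d₁) (Fin d₁) ℝ) :
    Matrix (Fin (d₁ + d₂)) (Fin (d₁ + d₂)) ℝ :=
  Matrix.of fun i j => if h : (i : ℕ) < d₁ ∧ (j : ℕ) < d₁ then M ⟨i, h.1⟩ ⟨j, h.2⟩ else 0

lemma embedTopLeft_sub (M N : Matrix (Fin d₁) (Fin d₁) ℝ) :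
    embedTopLeft d₂ (M - N) = embedTopLeft d₂ M - embedTopLeft d₂ N := by
  ext i j
  by_cases h : (i : ℕ) < d₁ ∧ (j : ℕ) < d₁ <;> simp [embedTopLeft, h]

lemma Matrix.IsHermitian.embedTopLeft {M : Matrix (Fin d₁) (Fin d₁) ℝ} (hM : M.IsHermitian) :
    (embedTopLeft d₂ M).IsHermitian := by
  ext i j
  simp only [conjTranspose_apply, _root_.embedTopLeft, of_apply, star_trivial]
  by_cases h : (i : ℕ) < d₁ ∧ (j : ℕ) < d₁
  · rw [dif_pos ⟨h.2, h.1⟩, dif_pos h, ← hM.apply, star_trivial]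
  · rw [dif_neg fun h' => h ⟨h'.2, h'.1⟩, dif_neg h]

lemma embedTopLeft_mulVec (M : Matrix (Fin d₁) (Fin d₁) ℝ) (m : Fin (d₁ + d₂) → ℝ) :
    embedTopLeft d₂ M *ᵥ m = Fin.append (M *ᵥ (m ∘ Fin.castAdd d₂)) 0 := by
  ext i
  refine Fin.addCases (fun k => ?_) (fun k => ?_) i
  · simp [embedTopLeft, mulVec, dotProduct, Fin.sum_univ_add]
  · simp [embedTopLeft, mulVec, dotProduct]

lemma embedTopLeft_mulVec_dotProduct_le {M : Matrix (Fin d₁) (Fin d₁) ℝ} {c : ℝ}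
    (hM : ∀ v, (M *ᵥ v) ⬝ᵥ (M *ᵥ v) ≤ c * (v ⬝ᵥ v)) (hc : 0 ≤ c) (m : Fin (d₁ + d₂) → ℝ) :
    (embedTopLeft d₂ M *ᵥ m) ⬝ᵥ (embedTopLeft d₂ M *ᵥ m) ≤ c * (m ⬝ᵥ m) := by
  have happend (u : Fin d₁ → ℝ) : Fin.append u (0 : Fin d₂ → ℝ) ⬝ᵥ Fin.append u 0 = u ⬝ᵥ u := by
    simp [dotProduct, Fin.sum_univ_add]
  have hrestrict : (m ∘ Fin.castAdd d₂) ⬝ᵥ (m ∘ Fin.castAdd d₂) ≤ m ⬝ᵥ m := by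
    simp only [dotProduct, Fin.sum_univ_add (fun i => m i * m i), Function.comp_apply,
      le_add_iff_nonneg_right]
    exact Finset.sum_nonneg fun i _ => mul_self_nonneg _
  rw [embedTopLeft_mulVec, happend]
  exact (hM _).trans (mul_le_mul_of_nonneg_left hrestrict hc)

lemma embedTopLeft_sub_mulVec_dotProduct_le {M₁ : Matrix (Fin d₁) (Fin d₁) ℝ}
    {M : Matrix (Fin (d₁ + d₂)) (Fin (d₁ + d₂)) ℝ} {c : ℝ}
    (hM₁ : ∀ v, (M₁ *ᵥ v) ⬝ᵥ (M₁ *ᵥ v) ≤ c * (v ⬝ᵥ v))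
    (hM : ∀ v, (M *ᵥ v) ⬝ᵥ (M *ᵥ v) ≤ c * (v ⬝ᵥ v)) (hc : 0 ≤ c) (m : Fin (d₁ + d₂) → ℝ) :
    ((embedTopLeft d₂ M₁ - M) *ᵥ m) ⬝ᵥ ((embedTopLeft d₂ M₁ - M) *ᵥ m) ≤ 4 * c * (m ⬝ᵥ m) := by
  rw [sub_mulVec]
  linarith [dotProduct_self_sub_le (embedTopLeft d₂ M₁ *ᵥ m) (M *ᵥ m),
    embedTopLeft_mulVec_dotProduct_le hM₁ hc m, hM m]

end TopLeftBlock

section PluginBias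

variable {n : Type*} [Fintype n] [DecidableEq n]

lemma abs_dotProduct_mulVec_perturbed_sub_le {Sig Shat : Matrix n n ℝ} (hSig : Sig.PosSemidef) {Lam lam ε N : ℝ} (hLam0 : 0 ≤ Lam)
    (hLam : Sig ≤ Lam • (1 : Matrix n n ℝ)) (hε0 : 0 ≤ ε) (hε : ε ≤ 1 / 2)
    (hlo : (1 - ε) ^ 2 • Sig ≤ Shat) (hhi : Shat ≤ (1 + ε) ^ 2 • Sig) {a Δ : n → ℝ}
    (hN : 0 ≤ N) (ha : a ⬝ᵥ a ≤ 4 * lam⁻¹ ^ 2 * N) (hΔ : Δ ⬝ᵥ Δ ≤ 4 * (10 * ε / lam) ^ 2 * N) :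
    |(a + Δ) ⬝ᵥ Shat *ᵥ (a + Δ) - a ⬝ᵥ Sig *ᵥ a| ≤
      1 / 8 * (a ⬝ᵥ Sig *ᵥ a) + 40000 * (Lam / lam ^ 2) * N * ε ^ 2 := by
  set K := Lam / lam ^ 2 * N
  have hShat : Shat.PosSemidef := ((smul_nonneg (sq_nonneg _) hSig.nonneg).trans hlo).posSemidef
  have hquad (v : n → ℝ) : v ⬝ᵥ Sig *ᵥ v ≤ Lam * (v ⬝ᵥ v) := by
    simpa [dotProduct_smul_mulVec] using dotProduct_mulVec_le_of_le hLam v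
  have hQ0 : 0 ≤ a ⬝ᵥ Sig *ᵥ a := by simpa using hSig.dotProduct_mulVec_nonneg a
  have hK0 : 0 ≤ K := by positivity
  have hQ : a ⬝ᵥ Sig *ᵥ a ≤ 4 * K := by
    calc _ ≤ Lam * (a ⬝ᵥ a) := hquad a
      _ ≤ Lam * (4 * lam⁻¹ ^ 2 * N) := by gcongr
      _ = 4 * K := by simp only [K]; ring
  have hP := dotProduct_mulVec_le_of_le hlo a
  have hP' := dotProduct_mulVec_le_of_le hhi a
  have hD : Δ ⬝ᵥ Shat *ᵥ Δ ≤ 900 * K * ε ^ 2 := by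
    calc _ ≤ (1 + ε) ^ 2 * (Δ ⬝ᵥ Sig *ᵥ Δ) := by
          simpa [dotProduct_smul_mulVec] using dotProduct_mulVec_le_of_le hhi Δ
      _ ≤ (1 + ε) ^ 2 * (Lam * (4 * (10 * ε / lam) ^ 2 * N)) := by
          gcongr; exact (hquad Δ).trans (by gcongr)
      _ = (1 + ε) ^ 2 * 400 * (K * ε ^ 2) := by simp only [K]; ring
      _ ≤ 9 / 4 * 400 * (K * ε ^ 2) := by gcongr; nlinarith
      _ = 900 * K * ε ^ 2 := by ring
  have hsplit := abs_dotProduct_mulVec_add_sub_le hShat a Δ (t := 1 / 36) (by norm_num)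
  rw [dotProduct_smul_mulVec] at hP hP'
  rw [abs_le] at hsplit ⊢
  constructor <;> nlinarith [mul_nonneg hK0 (sq_nonneg ε), mul_nonneg hQ0 (sq_nonneg ε),
    mul_nonneg hQ0 hε0, mul_nonneg (mul_nonneg hQ0 hε0) hε0]

lemma abs_dotProduct_mul_mul_mulVec_sub_le {Sig Shat R Rhat : Matrix n n ℝ}
    (hSig : Sig.PosSemidef) (hR : R.IsHermitian) (hRhat : Rhat.IsHermitian) {Lam lam ε : ℝ} (hLam0 : 0 ≤ Lam)
    (hLam : Sig ≤ Lam • (1 : Matrix n n ℝ)) (hε0 : 0 ≤ ε) (hε : ε ≤ 1 / 2)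
    (hlo : (1 - ε) ^ 2 • Sig ≤ Shat) (hhi : Shat ≤ (1 + ε) ^ 2 • Sig) {m : n → ℝ}
    (hRm : (R *ᵥ m) ⬝ᵥ (R *ᵥ m) ≤ 4 * lam⁻¹ ^ 2 * (m ⬝ᵥ m))
    (hΔm : ((Rhat - R) *ᵥ m) ⬝ᵥ ((Rhat - R) *ᵥ m) ≤ 4 * (10 * ε / lam) ^ 2 * (m ⬝ᵥ m)) :
    |m ⬝ᵥ (Rhat * Shat * Rhat) *ᵥ m - m ⬝ᵥ (R * Sig * R) *ᵥ m| ≤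
      1 / 8 * (m ⬝ᵥ (R * Sig * R) *ᵥ m) + 40000 * (Lam / lam ^ 2) * (m ⬝ᵥ m) * ε ^ 2 := by
  have key := abs_dotProduct_mulVec_perturbed_sub_le hSig hLam0 hLam hε0 hε hlo hhi
    (Finset.sum_nonneg fun i _ => mul_self_nonneg (m i)) hRm hΔm
  rwa [← add_mulVec, add_sub_cancel, ← dotProduct_mul_mul_mulVec hRhat,
    ← dotProduct_mul_mul_mulVec hR] at key

end PluginBias

/-- Bias bound for the plug-in residual estimator: if `Σ̂` and `Σ̂₁` are
multiplicative spectral approximations of `Σ` and `Σ₁` with accuracy `ε ≤ 1/2`,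
then `|⟨R̂ Σ̂ R̂ μ, μ⟩ - ⟨R Σ R μ, μ⟩| ≤ (1/8)⟨R Σ R μ, μ⟩ +
C (λ_max(Σ)/λ_min²(Σ)) ‖μ‖₂² ε²`, where `μ = E[xy]`, `R = D† - Σ⁻¹`,
`R̂ = D̂† - Σ̂⁻¹`, and `D` (resp. `D̂`) is the block matrix with top-left block `Σ₁`
(resp. `Σ̂₁`) and zeros elsewhere (the pseudoinverse of such a block matrix is the
block matrix of the inverse of the top-left block). -/
theorem plugin_residual_bias_bound :
    ∃ C : ℝ, 0 < C ∧
      ∀ (Ω : Type) [MeasurableSpace Ω] (μ : Measure Ω) [IsProbabilityMeasure μ]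
        (d₁ d₂ : ℕ) (hd₁ : 0 < d₁) (hd₂ : 0 < d₂)
        (x : Ω → Fin (d₁ + d₂) → ℝ) (y : Ω → ℝ),
        (∀ i j, Integrable (fun ω => x ω i * x ω j) μ) →
        (∀ i, Integrable (fun ω => x ω i * y ω) μ) →
        -- population second moment matrices
        ∀ (Sig : Matrix (Fin (d₁ + d₂)) (Fin (d₁ + d₂)) ℝ),
        (∀ i j, Sig i j = ∫ ω, x ω i * x ω j ∂μ) →
        ∀ (Sig1 : Matrix (Fin d₁) (Fin d₁) ℝ),
        (∀ i j, Sig1 i j = Sig (Fin.castAdd d₂ i) (Fin.castAdd d₂ j)) →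
        ∀ (hSig : Sig.PosDef) (hSig1 : Sig1.PosDef),
        -- estimated second moment matrices, spectrally ε-accurate
        ∀ (Shat : Matrix (Fin (d₁ + d₂)) (Fin (d₁ + d₂)) ℝ)
          (Shat1 : Matrix (Fin d₁) (Fin d₁) ℝ),
        Shat.IsHermitian → Shat1.IsHermitian →
        ∀ (ε : ℝ), 0 ≤ ε → ε ≤ 1 / 2 →
        ∀ (hA : ((posSemidefSqrt hSig.posSemidef)⁻¹ * Shat *
            (posSemidefSqrt hSig.posSemidef)⁻¹).IsHermitian),
        1 - ε ≤ Real.sqrt (specMin ((posSemidefSqrt hSig.posSemidef)⁻¹ * Shat *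
            (posSemidefSqrt hSig.posSemidef)⁻¹) hA) →
        Real.sqrt (specMax ((posSemidefSqrt hSig.posSemidef)⁻¹ * Shat *
            (posSemidefSqrt hSig.posSemidef)⁻¹) hA) ≤ 1 + ε →
        ∀ (hA1 : ((posSemidefSqrt hSig1.posSemidef)⁻¹ * Shat1 *
            (posSemidefSqrt hSig1.posSemidef)⁻¹).IsHermitian),
        1 - ε ≤ Real.sqrt (specMin ((posSemidefSqrt hSig1.posSemidef)⁻¹ * Shat1 *
            (posSemidefSqrt hSig1.posSemidef)⁻¹) hA1) →
        Real.sqrt (specMax ((posSemidefSqrt hSig1.posSemidef)⁻¹ * Shat1 *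
            (posSemidefSqrt hSig1.posSemidef)⁻¹) hA1) ≤ 1 + ε →
        -- μ = E[xy], R = D† - Σ⁻¹ and R̂ = D̂† - Σ̂⁻¹
        ∀ (μv : Fin (d₁ + d₂) → ℝ), (μv = fun i => ∫ ω, x ω i * y ω ∂μ) →
        ∀ (R Rhat : Matrix (Fin (d₁ + d₂)) (Fin (d₁ + d₂)) ℝ),
        (R = (Matrix.of fun i j : Fin (d₁ + d₂) =>
          if h : (i : ℕ) < d₁ ∧ (j : ℕ) < d₁ then Sig1⁻¹ ⟨i, h.1⟩ ⟨j, h.2⟩ else 0)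
            - Sig⁻¹) →
        (Rhat = (Matrix.of fun i j : Fin (d₁ + d₂) =>
          if h : (i : ℕ) < d₁ ∧ (j : ℕ) < d₁ then Shat1⁻¹ ⟨i, h.1⟩ ⟨j, h.2⟩ else 0)
            - Shat⁻¹) →
        |μv ⬝ᵥ (Rhat * Shat * Rhat).mulVec μv - μv ⬝ᵥ (R * Sig * R).mulVec μv| ≤
          (1 / 8) * (μv ⬝ᵥ (R * Sig * R).mulVec μv) +
            C * (specMax Sig hSig.1 / specMin Sig hSig.1 ^ 2) *
              (∑ i, μv i ^ 2) * ε ^ 2 := by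
  refine ⟨40000, by norm_num, ?_⟩
  intro Ω _ μ _ d₁ d₂ hd₁ _ x y _ _ Sig _ Sig1 hSig1 hSig hSig1pd Shat Shat1 hShat hShat1 ε hε0 hε
    hA hmin hmax hA1 hmin1 hmax1 μv _ R Rhat hR hRhat
  have : NeZero (d₁ + d₂) := ⟨by omega⟩
  have hlam := specMin_pos hSig
  have hlamSig := specMin_smul_one_le hSig.isHermitian
  have hlamSig1 : specMin Sig hSig.isHermitian • (1 : Matrix _ _ ℝ) ≤ Sig1 := by
    convert smul_one_le_submatrix hlamSig (Fin.castAddEmb d₂)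
    exact Matrix.ext hSig1
  have hspec := sq_le_and_le_sq_of_sqrt_specMin_specMax hA (by linarith) hmin hmax
  have hspec1 := sq_le_and_le_sq_of_sqrt_specMin_specMax hA1 (by linarith) hmin1 hmax1
  obtain ⟨hlo, hhi⟩ := smul_le_and_le_smul_of_spectrum_conj (isHermitian_posSemidefSqrt _)
    (isUnit_posSemidefSqrt hSig) (posSemidefSqrt_mul_self _) hA hspec
  have hpert := inv_sub_inv_mulVec_dotProduct_le (isHermitian_posSemidefSqrt _)
    (isUnit_posSemidefSqrt hSig) (posSemidefSqrt_mul_self _) hlam hlamSig hε0 hε hA hspec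
  have hpert1 := inv_sub_inv_mulVec_dotProduct_le (isHermitian_posSemidefSqrt _)
    (isUnit_posSemidefSqrt hSig1pd) (posSemidefSqrt_mul_self _) hlam hlamSig1 hε0 hε hA1 hspec1
  replace hR : R = embedTopLeft d₂ Sig1⁻¹ - Sig⁻¹ := hR
  replace hRhat : Rhat = embedTopLeft d₂ Shat1⁻¹ - Shat⁻¹ := hRhat
  have hRdiff : Rhat - R = embedTopLeft d₂ (Shat1⁻¹ - Sig1⁻¹) - (Shat⁻¹ - Sig⁻¹) := by
    rw [hR, hRhat, embedTopLeft_sub]; abel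
  rw [show ∑ i, μv i ^ 2 = μv ⬝ᵥ μv by simp [dotProduct, sq]]
  exact abs_dotProduct_mul_mul_mulVec_sub_le hSig.posSemidef
    (hR ▸ hSig1pd.isHermitian.inv.embedTopLeft.sub hSig.isHermitian.inv)
    (hRhat ▸ hShat1.inv.embedTopLeft.sub hShat.inv) (hlam.le.trans (specMin_le_specMax _))
    (le_specMax_smul_one _) hε0 hε hlo hhi
    (hR ▸ embedTopLeft_sub_mulVec_dotProduct_le (inv_mulVec_dotProduct_le hlam hlamSig1)
      (inv_mulVec_dotProduct_le hlam hlamSig) (sq_nonneg _) μv)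
    (hRdiff ▸ embedTopLeft_sub_mulVec_dotProduct_le hpert1 hpert (sq_nonneg _) μv)
end
end
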